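/- arXiv:2206.12314 — 2 statements merged into one kernel-verified Lean document; each statement's English description precedes it below -/
import Mathlib

section
/- Suppose a predictor fⁿ and target f* on the circle satisfy fⁿ(xᵢ) = f*(xᵢ) at ordered points 0 = x₁ < … < x_n < x_{n+1} = 2π, f* is C² with bounded second derivative, and on each interval (xᵢ, xᵢ₊₁) the predictor fⁿ is C² with |fⁿ''(x) − f*''(x)| ≤ M uniformly. Then the squared L2 error satisfies ∫₀^{2π}(fⁿ − f*)² dx ≤ (M²/120)·Σᵢ δᵢ⁵ + o(Σᵢ δᵢ⁵), where δᵢ = xᵢ₊₁ − xᵢ; in particular the error on interval i is bounded by (M²/120)·δᵢ⁵ up to higher-order terms. -/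
/-!
On each interval `[xᵢ, xᵢ₊₁]` the error `h = fⁿ - f*` vanishes at both ends and `|h''| ≤ M`.
The parabola `φ(t) = M/2 · (t - xᵢ)(xᵢ₊₁ - t)` has `φ'' = -M`, so `φ - h` and `φ + h` are
concave and vanish at the ends, hence are nonnegative: `|h| ≤ φ`. Integrating `φ²` over the
interval gives exactly `M²/120 · δᵢ⁵`, and summing over the intervals gives the bound.
-/

open Real Filter Topology

theorem hasDerivAt_deriv_sub {𝕜 F : Type*} [NontriviallyNormedField 𝕜] [NormedAddCommGroup F]
    [NormedSpace 𝕜 F] {f g : 𝕜 → F} {t : 𝕜} {f₂ g₂ : F}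
    (hf : ∀ᶠ s in 𝓝 t, DifferentiableAt 𝕜 f s) (hg : ∀ᶠ s in 𝓝 t, DifferentiableAt 𝕜 g s)
    (hf₂ : HasDerivAt (deriv f) f₂ t) (hg₂ : HasDerivAt (deriv g) g₂ t) :
    HasDerivAt (deriv fun s => f s - g s) (f₂ - g₂) t :=
  (hf₂.sub hg₂).congr_of_eventuallyEq <| by
    filter_upwards [hf, hg] with s hfs hgs using deriv_sub hfs hgs

theorem hasDerivAt_mul_sub_mul_sub (a b M t : ℝ) :
    HasDerivAt (fun s => M / 2 * ((s - a) * (b - s))) (M / 2 * (a + b - 2 * t)) t :=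
  ((((hasDerivAt_id t).sub_const a).mul ((hasDerivAt_const t b).sub (hasDerivAt_id t))).const_mul
    (M / 2)).congr_deriv (by simp only [Pi.sub_apply, id_eq]; ring)

section Interpolation

variable {a b M : ℝ} {h h₂ : ℝ → ℝ}

theorem le_mul_sub_mul_sub_of_neg_le_deriv2 (hc : ContinuousOn h (Set.Icc a b))
    (hd : ∀ t ∈ Set.Ioo a b, DifferentiableAt ℝ h t)
    (hd₂ : ∀ t ∈ Set.Ioo a b, HasDerivAt (deriv h) (h₂ t) t)
    (hM : ∀ t ∈ Set.Ioo a b, -M ≤ h₂ t) (ha : h a = 0) (hb : h b = 0) :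
    ∀ t ∈ Set.Icc a b, h t ≤ M / 2 * ((t - a) * (b - t)) := by
  set φ : ℝ → ℝ := fun s => M / 2 * ((s - a) * (b - s))
  have hφ₂ (t : ℝ) : HasDerivAt (deriv φ) (-M) t := by
    have : deriv φ = fun s => M / 2 * (a + b - 2 * s) :=
      funext fun s => (hasDerivAt_mul_sub_mul_sub a b M s).deriv
    rw [this]
    exact ((((hasDerivAt_id t).const_mul 2).const_sub (a + b)).const_mul (M / 2)).congr_deriv
      (by ring)
  have hu₂ : ∀ t ∈ Set.Ioo a b, HasDerivAt (deriv fun s => φ s - h s) (-M - h₂ t) t :=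
    fun t ht => hasDerivAt_deriv_sub
      (Eventually.of_forall fun s => (hasDerivAt_mul_sub_mul_sub a b M s).differentiableAt)
      (eventually_of_mem (isOpen_Ioo.mem_nhds ht) hd) (hφ₂ t) (hd₂ t ht)
  have hconcave : ConcaveOn ℝ (Set.Icc a b) fun s => φ s - h s := by
    refine concaveOn_of_deriv2_nonpos (convex_Icc a b)
      ((by fun_prop : Continuous φ).continuousOn.sub hc) ?_ ?_ ?_ <;> rw [interior_Icc]
    · exact fun t ht => ((hasDerivAt_mul_sub_mul_sub a b M t).differentiableAt.sub
        (hd t ht)).differentiableWithinAt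
    · exact fun t ht => (hu₂ t ht).differentiableAt.differentiableWithinAt
    · intro t ht
      rw [Function.iterate_succ_apply', Function.iterate_one, (hu₂ t ht).deriv]
      linarith [hM t ht]
  intro t ht
  have hab : a ≤ b := ht.1.trans ht.2
  have := hconcave.min_le_of_mem_Icc (Set.left_mem_Icc.2 hab) (Set.right_mem_Icc.2 hab) ht
  simp only [φ, ha, hb, sub_self, mul_zero, zero_mul, min_self] at this
  linarith

theorem abs_le_mul_sub_mul_sub_of_abs_deriv2_le (hc : ContinuousOn h (Set.Icc a b))
    (hd : ∀ t ∈ Set.Ioo a b, DifferentiableAt ℝ h t)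
    (hd₂ : ∀ t ∈ Set.Ioo a b, HasDerivAt (deriv h) (h₂ t) t)
    (hM : ∀ t ∈ Set.Ioo a b, |h₂ t| ≤ M) (ha : h a = 0) (hb : h b = 0) :
    ∀ t ∈ Set.Icc a b, |h t| ≤ M / 2 * ((t - a) * (b - t)) := by
  intro t ht
  have hneg := le_mul_sub_mul_sub_of_neg_le_deriv2 (M := M) (h := -h) (h₂ := -h₂) hc.neg
    (fun s hs => (hd s hs).neg) (fun s hs => by rw [deriv.neg']; exact (hd₂ s hs).neg)
    (fun s hs => by simpa using le_of_abs_le (hM s hs)) (by simp [ha]) (by simp [hb]) t ht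
  have hpos := le_mul_sub_mul_sub_of_neg_le_deriv2 hc hd hd₂
    (fun s hs => neg_le_of_abs_le (hM s hs)) ha hb t ht
  exact abs_le.2 ⟨by simp only [Pi.neg_apply] at hneg; linarith, hpos⟩

theorem integral_sq_mul_sub_mul_sub (a b : ℝ) :
    ∫ t in a..b, ((t - a) * (b - t)) ^ 2 = (b - a) ^ 5 / 30 := by
  have hF (t : ℝ) : HasDerivAt
      (fun t => (b - a) ^ 2 * (t - a) ^ 3 / 3 - (b - a) * (t - a) ^ 4 / 2 + (t - a) ^ 5 / 5)
      (((t - a) * (b - t)) ^ 2) t := by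
    have h1 : HasDerivAt (fun u : ℝ => u - a) 1 t := (hasDerivAt_id t).sub_const a
    refine ((((h1.pow 3).const_mul ((b - a) ^ 2)).div_const 3).sub
      (((h1.pow 4).const_mul (b - a)).div_const 2) |>.add ((h1.pow 5).div_const 5)).congr_deriv ?_
    push_cast; ring
  rw [intervalIntegral.integral_eq_sub_of_hasDerivAt (fun t _ => hF t)
    (Continuous.intervalIntegrable (by fun_prop) _ _)]
  ring

theorem integral_sq_le_of_abs_deriv2_le (hab : a ≤ b) (hc : ContinuousOn h (Set.Icc a b))
    (hd : ∀ t ∈ Set.Ioo a b, DifferentiableAt ℝ h t)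
    (hd₂ : ∀ t ∈ Set.Ioo a b, HasDerivAt (deriv h) (h₂ t) t)
    (hM : ∀ t ∈ Set.Ioo a b, |h₂ t| ≤ M) (ha : h a = 0) (hb : h b = 0) :
    ∫ t in a..b, h t ^ 2 ≤ M ^ 2 / 120 * (b - a) ^ 5 := by
  have hbound := abs_le_mul_sub_mul_sub_of_abs_deriv2_le hc hd hd₂ hM ha hb
  calc ∫ t in a..b, h t ^ 2
      ≤ ∫ t in a..b, (M / 2 * ((t - a) * (b - t))) ^ 2 := by
        refine intervalIntegral.integral_mono_on hab
          ((hc.pow 2).intervalIntegrable_of_Icc hab)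
          (Continuous.intervalIntegrable (by fun_prop) _ _) fun t ht => ?_
        rw [← sq_abs (h t)]
        exact pow_le_pow_left₀ (abs_nonneg _) (hbound t ht) 2
    _ = M ^ 2 / 4 * ∫ t in a..b, ((t - a) * (b - t)) ^ 2 := by
        rw [← intervalIntegral.integral_const_mul]; congr 1; ext t; ring
    _ = M ^ 2 / 120 * (b - a) ^ 5 := by rw [integral_sq_mul_sub_mul_sub]; ring

end Interpolation

section Partition

variable {x : ℕ → ℝ} {m n i : ℕ}

theorem apply_le_apply_succ_of_monotoneOn (hx : MonotoneOn x (Set.Icc m n))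
    (hi : i ∈ Finset.Ico m n) : x i ≤ x (i + 1) := by
  rw [Finset.mem_Ico] at hi
  exact hx ⟨hi.1, hi.2.le⟩ ⟨by omega, hi.2⟩ (Nat.le_succ i)

theorem Icc_subset_Icc_of_monotoneOn (hx : MonotoneOn x (Set.Icc m n)) (hi : i ∈ Finset.Ico m n) :
    Set.Icc (x i) (x (i + 1)) ⊆ Set.Icc (x m) (x n) := by
  rw [Finset.mem_Ico] at hi
  exact Set.Icc_subset_Icc (hx ⟨le_rfl, by omega⟩ ⟨hi.1, hi.2.le⟩ hi.1)
    (hx ⟨by omega, hi.2⟩ ⟨by omega, le_rfl⟩ hi.2)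

theorem integral_eq_sum_integral_of_monotoneOn {f : ℝ → ℝ} (hmn : m ≤ n)
    (hx : MonotoneOn x (Set.Icc m n)) (hf : ContinuousOn f (Set.Icc (x m) (x n))) :
    ∫ t in x m..x n, f t = ∑ i ∈ Finset.Ico m n, ∫ t in x i..x (i + 1), f t := by
  refine (intervalIntegral.sum_integral_adjacent_intervals_Ico hmn fun i hi => ?_).symm
  rw [← Finset.coe_Ico, Finset.mem_coe] at hi
  exact (hf.mono (Icc_subset_Icc_of_monotoneOn hx hi)).intervalIntegrable_of_Icc
    (apply_le_apply_succ_of_monotoneOn hx hi)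

end Partition

theorem predictor_error_bound_general (n : ℕ)
    (x : ℕ → ℝ) (hx1 : x 1 = 0) (hxend : x (n+1) = 2*π)
    (hmono : StrictMonoOn x (Set.Icc 1 (n+1)))
    (fn fstar : ℝ → ℝ) (M : ℝ)
    (hfstar : ContDiff ℝ 2 fstar)
    (hfncont : ContinuousOn fn (Set.Icc 0 (2*π)))
    (hinterp : ∀ i ∈ Finset.Icc 1 (n+1), fn (x i) = fstar (x i))
    (hdiff : ∀ i ∈ Finset.Icc 1 n, ∀ t ∈ Set.Ioo (x i) (x (i+1)),
      DifferentiableAt ℝ fn t ∧ DifferentiableAt ℝ (deriv fn) t)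
    (hM : ∀ i ∈ Finset.Icc 1 n, ∀ t ∈ Set.Ioo (x i) (x (i+1)),
      |deriv (deriv fn) t - deriv (deriv fstar) t| ≤ M) :
    ∫ t in (0:ℝ)..(2*π), (fn t - fstar t)^2
      ≤ M^2/120 * ∑ i ∈ Finset.Icc 1 n, (x (i+1) - x i)^5 := by
  have hfstar₁ : Differentiable ℝ fstar := hfstar.differentiable (by norm_num)
  have hcont : ContinuousOn (fun t => fn t - fstar t) (Set.Icc (x 1) (x (n + 1))) := by
    rw [hx1, hxend]; exact hfncont.sub hfstar₁.continuous.continuousOn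
  have hzero : ∀ j ∈ Finset.Icc 1 (n + 1), fn (x j) - fstar (x j) = 0 :=
    fun j hj => sub_eq_zero.2 (hinterp j hj)
  rw [← Finset.Ico_add_one_right_eq_Icc] at hdiff hM ⊢
  rw [← hx1, ← hxend, Finset.mul_sum, integral_eq_sum_integral_of_monotoneOn
    (f := fun t => (fn t - fstar t) ^ 2) (by omega) hmono.monotoneOn (hcont.pow 2)]
  refine Finset.sum_le_sum fun i hi => ?_
  obtain ⟨hi₁, hi₂⟩ := Finset.mem_Ico.1 hi
  exact integral_sq_le_of_abs_deriv2_le (apply_le_apply_succ_of_monotoneOn hmono.monotoneOn hi)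
    (hcont.mono (Icc_subset_Icc_of_monotoneOn hmono.monotoneOn hi))
    (fun t ht => (hdiff i hi t ht).1.sub (hfstar₁ t))
    (fun t ht => hasDerivAt_deriv_sub (eventually_of_mem (isOpen_Ioo.mem_nhds ht)
      fun s hs => (hdiff i hi s hs).1) (Eventually.of_forall hfstar₁)
      (hdiff i hi t ht).2.hasDerivAt (hfstar.differentiable_deriv_two t).hasDerivAt)
    (hM i hi) (hzero i (Finset.mem_Icc.2 ⟨hi₁, hi₂.le⟩))
    (hzero (i + 1) (Finset.mem_Icc.2 ⟨by omega, hi₂⟩))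

/-- If a predictor `fⁿ` matches a `C²` target `f*` at ordered points
`0 = x₁ < … < x_n < x_{n+1} = 2π`, is continuous, and on each interval `(xᵢ, xᵢ₊₁)` is
twice differentiable with `|fⁿ'' − f*''| ≤ M`, then
`∫₀^{2π}(fⁿ − f*)² ≤ (M²/120)·Σᵢ δᵢ⁵` with `δᵢ = xᵢ₊₁ − xᵢ`. -/
theorem predictor_error_bound (n : ℕ) (hn : 1 ≤ n)
    (x : ℕ → ℝ) (hx1 : x 1 = 0) (hxend : x (n+1) = 2*π)
    (hmono : StrictMonoOn x (Set.Icc 1 (n+1)))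
    (fn fstar : ℝ → ℝ) (M : ℝ)
    (hfstar : ContDiff ℝ 2 fstar)
    (hfncont : ContinuousOn fn (Set.Icc 0 (2*π)))
    (hinterp : ∀ i ∈ Finset.Icc 1 (n+1), fn (x i) = fstar (x i))
    (hdiff : ∀ i ∈ Finset.Icc 1 n, ∀ t ∈ Set.Ioo (x i) (x (i+1)),
      DifferentiableAt ℝ fn t ∧ DifferentiableAt ℝ (deriv fn) t)
    (hM : ∀ i ∈ Finset.Icc 1 n, ∀ t ∈ Set.Ioo (x i) (x (i+1)),
      |deriv (deriv fn) t - deriv (deriv fstar) t| ≤ M) :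
    ∫ t in (0:ℝ)..(2*π), (fn t - fstar t)^2
      ≤ M^2/120 * ∑ i ∈ Finset.Icc 1 n, (x (i+1) - x i)^5 :=
  predictor_error_bound_general n x hx1 hxend hmono fn fstar M hfstar hfncont hinterp hdiff hM
end

section
/- Define κ(n) implicitly by κ = (1/n)·∫₀^{φ₀} D(φ)·φκ/(φ+κ) dφ with eigenvalue density D(φ) = φ^{−(2(d−1)+2ν)/((d−1)+2ν)} for φ ∈ (0, φ₀]. Then as n → ∞, κ(n) = Θ(n^{−1−2ν/(d−1)}). -/
/-!
With `p = -(d-1)/((d-1)+2ν) ∈ (-1, 0)` the density is `φ^(p-1)`, and the self-consistency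
equation reads `n κ = ∫₀^{φ₀} φ^p κ/(φ+κ) dφ`. The integral is at most `∫₀^{φ₀} φ^p`, so
`κ = O(1/n)` and eventually `κ ≤ φ₀`. Splitting the integral at `φ = κ`, where `κ/(φ+κ) ≥ 1/2`
below and `κ/(φ+κ) ≤ κ/φ` above, shows that it is comparable to `κ^(p+1)`. Hence `n ≍ κ^p`,
that is `κ ≍ n^(1/p) = n^(-1-2ν/(d-1))`.
-/

open Filter MeasureTheory intervalIntegral
open Set

lemma rpow_sub_one_mul_mul_div_add {p x : ℝ} (hp : p ≠ 0) (hx : 0 ≤ x) (k : ℝ) :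
    x ^ (p - 1) * (x * k / (x + k)) = x ^ p * (k / (x + k)) := by
  conv_rhs => rw [← sub_add_cancel p 1, Real.rpow_add_one' hx (by simpa)]
  ring

lemma rpow_neg_inv_mul_rpow_inv_le_of_mul_rpow_le {p c n k : ℝ} (hp : p < 0) (hc : 0 < c)
    (hk : 0 < k) (h : c * k ^ p ≤ n) : c ^ (-p⁻¹) * n ^ p⁻¹ ≤ k := by
  have hn : 0 < n := lt_of_lt_of_le (by positivity) h
  calc c ^ (-p⁻¹) * n ^ p⁻¹ = (n / c) ^ p⁻¹ := by
        rw [Real.div_rpow hn.le hc.le, Real.rpow_neg hc.le, div_eq_inv_mul]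
    _ ≤ (k ^ p) ^ p⁻¹ := Real.rpow_le_rpow_of_nonpos (by positivity)
        (by rwa [le_div_iff₀ hc, mul_comm]) (inv_nonpos.2 hp.le)
    _ = k := Real.rpow_rpow_inv hk.le hp.ne

lemma le_rpow_neg_inv_mul_rpow_inv_of_le_mul_rpow {p C n k : ℝ} (hp : p < 0) (hC : 0 < C)
    (hn : 0 < n) (hk : 0 < k) (h : n ≤ C * k ^ p) : k ≤ C ^ (-p⁻¹) * n ^ p⁻¹ := by
  calc k = (k ^ p) ^ p⁻¹ := (Real.rpow_rpow_inv hk.le hp.ne).symm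
    _ ≤ (n / C) ^ p⁻¹ := Real.rpow_le_rpow_of_nonpos (by positivity)
        (by rwa [div_le_iff₀ hC, mul_comm]) (inv_nonpos.2 hp.le)
    _ = C ^ (-p⁻¹) * n ^ p⁻¹ := by
        rw [Real.div_rpow hn.le hC.le, Real.rpow_neg hC.le, div_eq_inv_mul]

section RegularizedIntegral

variable {p k : ℝ}

lemma integral_zero_rpow (hp : -1 < p) (b : ℝ) :
    ∫ x in (0:ℝ)..b, x ^ p = b ^ (p + 1) / (p + 1) := by
  rw [integral_rpow (Or.inl hp), Real.zero_rpow (by linarith), sub_zero]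

lemma intervalIntegrable_rpow_mul_div_add (hp : -1 < p) (hk : 0 < k) {a b : ℝ}
    (ha : 0 ≤ a) (hb : 0 ≤ b) :
    IntervalIntegrable (fun x => x ^ p * (k / (x + k))) volume a b := by
  refine (intervalIntegrable_rpow' hp).mul_continuousOn <|
    continuousOn_const.div (continuousOn_id.add continuousOn_const) fun x hx => ?_
  have : 0 ≤ x := (le_inf ha hb).trans hx.1
  positivity

lemma integral_rpow_mul_div_add_le (hp : -1 < p) (hk : 0 < k) {a b : ℝ}
    (ha : 0 ≤ a) (hab : a ≤ b) :
    ∫ x in a..b, x ^ p * (k / (x + k)) ≤ ∫ x in a..b, x ^ p := by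
  refine integral_mono_on hab (intervalIntegrable_rpow_mul_div_add hp hk ha (ha.trans hab))
    (intervalIntegrable_rpow' hp) fun x hx => ?_
  have hx0 : 0 ≤ x := ha.trans hx.1
  exact mul_le_of_le_one_right (Real.rpow_nonneg hx0 p)
    ((div_le_one (by positivity)).2 (by linarith))

lemma rpow_add_one_div_two_le_integral (hp : -1 < p) (hk : 0 < k) {b : ℝ} (hkb : k ≤ b) :
    1 / (2 * (p + 1)) * k ^ (p + 1) ≤ ∫ x in (0:ℝ)..b, x ^ p * (k / (x + k)) := by
  have hhalf : ∀ x ∈ Icc 0 k, 1 / 2 * x ^ p ≤ x ^ p * (k / (x + k)) := fun x hx => by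
    rw [mul_comm]
    refine mul_le_mul_of_nonneg_left ?_ (Real.rpow_nonneg hx.1 p)
    rw [le_div_iff₀ (by linarith [hx.1])]
    linarith [hx.2]
  calc 1 / (2 * (p + 1)) * k ^ (p + 1) = ∫ x in (0:ℝ)..k, 1 / 2 * x ^ p := by
        rw [intervalIntegral.integral_const_mul, integral_zero_rpow hp]; field_simp
    _ ≤ ∫ x in (0:ℝ)..k, x ^ p * (k / (x + k)) :=
        integral_mono_on hk.le ((intervalIntegrable_rpow' hp).const_mul _)
          (intervalIntegrable_rpow_mul_div_add hp hk le_rfl hk.le) hhalf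
    _ ≤ ∫ x in (0:ℝ)..b, x ^ p * (k / (x + k)) :=
        integral_mono_interval le_rfl hk.le hkb
          ((ae_restrict_mem measurableSet_Ioc).mono fun x hx => by
            have := hx.1.le; positivity)
          (intervalIntegrable_rpow_mul_div_add hp hk le_rfl (hk.le.trans hkb))

lemma integral_rpow_mul_div_add_le_of_le (hp : -1 < p) (hp0 : p < 0) (hk : 0 < k) {b : ℝ}
    (hkb : k ≤ b) :
    ∫ x in (0:ℝ)..b, x ^ p * (k / (x + k)) ≤ (1 / (p + 1) - 1 / p) * k ^ (p + 1) := by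
  have hb : 0 < b := hk.trans_le hkb
  have hhead : ∫ x in (0:ℝ)..k, x ^ p * (k / (x + k)) ≤ k ^ (p + 1) / (p + 1) :=
    (integral_rpow_mul_div_add_le hp hk le_rfl hk.le).trans_eq (integral_zero_rpow hp k)
  have htail : ∫ x in k..b, x ^ p * (k / (x + k)) ≤ -(k ^ (p + 1) / p) := by
    have hpt : ∀ x ∈ Icc k b, x ^ p * (k / (x + k)) ≤ k * x ^ (p - 1) := fun x hx => by
      have hx0 : 0 < x := hk.trans_le hx.1
      calc x ^ p * (k / (x + k)) ≤ x ^ p * (k / x) :=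
            mul_le_mul_of_nonneg_left (div_le_div_of_nonneg_left hk.le hx0 (by linarith))
              (Real.rpow_nonneg hx0.le p)
        _ = k * x ^ (p - 1) := by rw [Real.rpow_sub_one hx0.ne']; ring
    calc ∫ x in k..b, x ^ p * (k / (x + k)) ≤ ∫ x in k..b, k * x ^ (p - 1) :=
          integral_mono_on hkb (intervalIntegrable_rpow_mul_div_add hp hk hk.le hb.le)
            ((intervalIntegrable_rpow (Or.inr (notMem_uIcc_of_lt hk hb))).const_mul k) hpt
      _ = k * ((b ^ p - k ^ p) / p) := by
          rw [intervalIntegral.integral_const_mul,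
            integral_rpow (Or.inr ⟨by linarith, notMem_uIcc_of_lt hk hb⟩), sub_add_cancel]
      _ ≤ -(k ^ (p + 1) / p) := by
          rw [Real.rpow_add_one hk.ne', sub_div, mul_sub, mul_comm (k ^ p), mul_div_assoc]
          have : b ^ p / p ≤ 0 :=
            div_nonpos_of_nonneg_of_nonpos (Real.rpow_nonneg hb.le p) hp0.le
          nlinarith
  rw [show (1 / (p + 1) - 1 / p) * k ^ (p + 1) = k ^ (p + 1) / (p + 1) + -(k ^ (p + 1) / p) by ring,
    ← integral_add_adjacent_intervals (intervalIntegrable_rpow_mul_div_add hp hk le_rfl hk.le)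
      (intervalIntegrable_rpow_mul_div_add hp hk hk.le hb.le)]
  exact add_le_add hhead htail

lemma exists_bounds_of_mul_eq_integral_rpow_mul_div_add (hp : -1 < p) (hp0 : p < 0) :
    ∃ c₁ c₂ : ℝ, 0 < c₁ ∧ 0 < c₂ ∧ ∀ {k n b : ℝ}, 0 < k → k ≤ b →
      n * k = ∫ x in (0:ℝ)..b, x ^ p * (k / (x + k)) →
        c₁ * n ^ p⁻¹ ≤ k ∧ k ≤ c₂ * n ^ p⁻¹ := by
  have hc : 0 < 1 / (2 * (p + 1)) := one_div_pos.2 (by linarith)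
  have hC : 0 < 1 / (p + 1) - 1 / p :=
    sub_pos.2 ((one_div_neg.2 hp0).trans (one_div_pos.2 (by linarith)))
  refine ⟨_, _, Real.rpow_pos_of_pos hc (-p⁻¹), Real.rpow_pos_of_pos hC (-p⁻¹),
    fun {k n b} hk hkb hfix => ?_⟩
  have hlower := (rpow_add_one_div_two_le_integral hp hk hkb).trans_eq hfix.symm
  have hupper := hfix.trans_le (integral_rpow_mul_div_add_le_of_le hp hp0 hk hkb)
  rw [Real.rpow_add_one hk.ne', ← mul_assoc] at hlower hupper
  have hlower' : 1 / (2 * (p + 1)) * k ^ p ≤ n := le_of_mul_le_mul_right hlower hk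
  have hn : 0 < n := lt_of_lt_of_le (by positivity) hlower'
  exact ⟨rpow_neg_inv_mul_rpow_inv_le_of_mul_rpow_le hp0 hc hk hlower',
    le_rpow_neg_inv_mul_rpow_inv_of_le_mul_rpow hp0 hC hn hk (le_of_mul_le_mul_right hupper hk)⟩

variable {b : ℝ} {κ : ℕ → ℝ}

lemma eventually_le_of_mul_eq_integral_rpow_mul_div_add (hp : -1 < p) (hb : 0 < b)
    (hκ : ∀ n, 0 < κ n)
    (hfix : ∀ n : ℕ, 1 ≤ n → n * κ n = ∫ x in (0:ℝ)..b, x ^ p * (κ n / (x + κ n))) :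
    ∀ᶠ n : ℕ in atTop, κ n ≤ b := by
  filter_upwards [eventually_ge_atTop 1,
    (tendsto_const_div_atTop_nhds_zero_nat (b ^ (p + 1) / (p + 1))).eventually
      (ge_mem_nhds hb)] with n hn hsmall
  refine le_trans ?_ hsmall
  rw [le_div_iff₀ (Nat.cast_pos.2 hn), mul_comm, hfix n hn, ← integral_zero_rpow hp]
  exact integral_rpow_mul_div_add_le hp (hκ n) le_rfl hb.le

lemma exists_rpow_inv_bounds_of_mul_eq_integral_rpow_mul_div_add (hp : -1 < p) (hp0 : p < 0)
    (hb : 0 < b) (hκ : ∀ n, 0 < κ n)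
    (hfix : ∀ n : ℕ, 1 ≤ n → n * κ n = ∫ x in (0:ℝ)..b, x ^ p * (κ n / (x + κ n))) :
    ∃ c₁ c₂ : ℝ, 0 < c₁ ∧ 0 < c₂ ∧ ∀ᶠ n : ℕ in atTop,
      c₁ * (n:ℝ) ^ p⁻¹ ≤ κ n ∧ κ n ≤ c₂ * (n:ℝ) ^ p⁻¹ := by
  obtain ⟨c₁, c₂, hc₁, hc₂, hbounds⟩ := exists_bounds_of_mul_eq_integral_rpow_mul_div_add hp hp0
  refine ⟨c₁, c₂, hc₁, hc₂, ?_⟩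
  filter_upwards [eventually_ge_atTop 1,
    eventually_le_of_mul_eq_integral_rpow_mul_div_add hp hb hκ hfix] with n hn hκb
  exact hbounds (hκ n) hκb (hfix n hn)

end RegularizedIntegral

/-- If `κ(n)` satisfies the self-consistency equation
`κ = (1/n)·∫₀^{φ₀} D(φ)·φκ/(φ+κ) dφ` with eigenvalue density
`D(φ) = φ^{−(2(d−1)+2ν)/((d−1)+2ν)}`, then `κ(n) = Θ(n^{−1−2ν/(d−1)})` as `n → ∞`. -/
theorem kappa_asymptotics (d : ℕ) (hd : 2 ≤ d) (ν φ₀ : ℝ) (hν : 0 < ν) (hφ₀ : 0 < φ₀)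
    (κ : ℕ → ℝ) (hκpos : ∀ n, 0 < κ n)
    (hself : ∀ n : ℕ, 1 ≤ n → κ n = (1/(n:ℝ)) *
      ∫ φ in (0:ℝ)..φ₀,
        φ^(-(2*((d:ℝ)-1)+2*ν)/(((d:ℝ)-1)+2*ν)) * (φ * κ n / (φ + κ n))) :
    ∃ c₁ c₂ : ℝ, 0 < c₁ ∧ 0 < c₂ ∧ ∀ᶠ n : ℕ in atTop,
      c₁ * (n:ℝ)^(-1-2*ν/((d:ℝ)-1)) ≤ κ n ∧ κ n ≤ c₂ * (n:ℝ)^(-1-2*ν/((d:ℝ)-1)) := by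
  have hd1 : (0:ℝ) < (d:ℝ) - 1 := by
    have : (2:ℝ) ≤ d := by exact_mod_cast hd
    linarith
  set p : ℝ := -((d:ℝ) - 1) / ((d:ℝ) - 1 + 2 * ν) with hp_def
  have hp0 : p < 0 := div_neg_of_neg_of_pos (by linarith) (by linarith)
  have hp : -1 < p := by rw [hp_def, neg_div, neg_lt_neg_iff, div_lt_one (by linarith)]; linarith
  have hexp : -(2*((d:ℝ)-1)+2*ν)/(((d:ℝ)-1)+2*ν) = p - 1 := by
    rw [hp_def]; field_simp; ring
  have hrate : p⁻¹ = -1-2*ν/((d:ℝ)-1) := by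
    rw [hp_def]; field_simp; ring
  have hfix : ∀ n : ℕ, 1 ≤ n → (n:ℝ) * κ n = ∫ x in (0:ℝ)..φ₀, x ^ p * (κ n / (x + κ n)) := by
    intro n hn
    have : (n:ℝ) ≠ 0 := by positivity
    conv_lhs => rw [hself n hn, ← mul_assoc, mul_one_div_cancel this, one_mul, hexp]
    refine integral_congr fun x hx => rpow_sub_one_mul_mul_div_add hp0.ne ?_ _
    exact (le_inf le_rfl hφ₀.le).trans hx.1
  rw [← hrate]
  exact exists_rpow_inv_bounds_of_mul_eq_integral_rpow_mul_div_add hp hp0 hφ₀ hκpos hfix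
end
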